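/- arXiv:1906.07287 — 4 statements merged into one kernel-verified Lean document; each statement's English description precedes it below -/
import Mathlib

section
/- For any involutive braiding R (i.e. a solution of the braid relation with R² = I) and any complex numbers u, v, w with u≠v, u≠w, v≠w, the current braiding R(u,v) := R − I/(u−v) satisfies the parameter-dependent braid relation R₁₂(u,v) R₂₃(u,w) R₁₂(v,w) = R₂₃(v,w) R₁₂(u,w) R₂₃(u,v). -/
open Matrix Kronecker

noncomputable section

/-- The involutive symmetry R = [[1,0,0,0],[0,0,q,0],[0,q⁻¹,0,0],[0,0,0,1]] on ℂ²⊗ℂ². -/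
def Rinv (q : ℂ) : Matrix (Fin 2 × Fin 2) (Fin 2 × Fin 2) ℂ :=
  Matrix.of fun p r =>
    if p = r ∧ p.1 = p.2 then 1
    else if p = (0, 1) ∧ r = (1, 0) then q
    else if p = (1, 0) ∧ r = (0, 1) then q⁻¹ else 0

/-- The standard Hecke symmetry R = [[q,0,0,0],[0,q−q⁻¹,1,0],[0,1,0,0],[0,0,0,q]]. -/
def RHecke (q : ℂ) : Matrix (Fin 2 × Fin 2) (Fin 2 × Fin 2) ℂ :=
  Matrix.of fun p r =>
    if p = (0, 0) ∧ r = (0, 0) then q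
    else if p = (1, 1) ∧ r = (1, 1) then q
    else if p = (0, 1) ∧ r = (0, 1) then q - q⁻¹
    else if p = (0, 1) ∧ r = (1, 0) then 1
    else if p = (1, 0) ∧ r = (0, 1) then 1 else 0

/-- An operator on V⊗V placed in positions (1,2) of V⊗V⊗V. -/
def pos12 {n α : Type*} [Fintype n] [DecidableEq n] [Semiring α]
    (X : Matrix (n × n) (n × n) α) : Matrix (n × n × n) (n × n × n) α :=
  Matrix.reindex (Equiv.prodAssoc n n n) (Equiv.prodAssoc n n n)
    (X ⊗ₖ (1 : Matrix n n α))

/-- An operator on V⊗V placed in positions (2,3) of V⊗V⊗V. -/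
def pos23 {n α : Type*} [Fintype n] [DecidableEq n] [Semiring α]
    (X : Matrix (n × n) (n × n) α) : Matrix (n × n × n) (n × n × n) α :=
  (1 : Matrix n n α) ⊗ₖ X


section helpers
variable {n : Type*} [Fintype n] [DecidableEq n]

lemma pos12_sub' (X Y : Matrix (n × n) (n × n) ℂ) : pos12 (X - Y) = pos12 X - pos12 Y := by
  ext i j
  simp [pos12, Matrix.kroneckerMap_apply, sub_mul]

lemma pos12_one' : pos12 (1 : Matrix (n × n) (n × n) ℂ) = 1 := by
  simp [pos12, Matrix.one_kronecker_one, Matrix.reindex_apply, Matrix.submatrix_one_equiv]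

lemma pos23_sub' (X Y : Matrix (n × n) (n × n) ℂ) : pos23 (X - Y) = pos23 X - pos23 Y := by
  ext i j
  simp [pos23, Matrix.kroneckerMap_apply, mul_sub]

lemma pos23_one' : pos23 (1 : Matrix (n × n) (n × n) ℂ) = 1 := by
  simp [pos23, Matrix.one_kronecker_one]

lemma pos12_smul' (s : ℂ) (X : Matrix (n × n) (n × n) ℂ) : pos12 (s • X) = s • pos12 X := by
  ext i j
  simp [pos12, Matrix.kroneckerMap_apply]; ring

lemma pos23_smul' (s : ℂ) (X : Matrix (n × n) (n × n) ℂ) : pos23 (s • X) = s • pos23 X := by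
  ext i j
  simp [pos23, Matrix.kroneckerMap_apply]; ring

lemma pos12_mul' (X Y : Matrix (n × n) (n × n) ℂ) : pos12 (X * Y) = pos12 X * pos12 Y := by
  simp only [pos12, ← Matrix.mul_kronecker_mul, Matrix.one_mul, Matrix.reindex_apply,
    Matrix.submatrix_mul_equiv]

lemma pos23_mul' (X Y : Matrix (n × n) (n × n) ℂ) : pos23 (X * Y) = pos23 X * pos23 Y := by
  simp [pos23, ← Matrix.mul_kronecker_mul]

lemma key_baxter {M : Type*} [Ring M] [Algebra ℂ M] (A B : M) (a b c : ℂ)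
    (hA : A * A = 1) (hB : B * B = 1) (hbr : A * B * A = B * A * B)
    (habc : a * b + b * c = a * c) :
    (A - a • 1) * (B - b • 1) * (A - c • 1) = (B - c • 1) * (A - b • 1) * (B - a • 1) := by
  have hbr' : A * (B * A) = B * (A * B) := by simpa [mul_assoc] using hbr
  simp only [sub_mul, mul_sub, Algebra.smul_mul_assoc, Algebra.mul_smul_comm, smul_smul,
    mul_one, one_mul, mul_assoc, hA, hB, hbr']
  match_scalars
  all_goals try ring
  all_goals first
    | linear_combination habc
    | linear_combination -habc
    | linear_combination 2 * habc
    | linear_combination -2 * habc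

end helpers

/-- Baxterization of an involutive symmetry: R(u,v) := R − I/(u−v)
satisfies the parameter-dependent braid relation. -/
theorem stmt2 {n : Type*} [Fintype n] [DecidableEq n]
    (R : Matrix (n × n) (n × n) ℂ)
    (hbraid : pos12 R * pos23 R * pos12 R = pos23 R * pos12 R * pos23 R)
    (hinv : R * R = 1)
    (u v w : ℂ) (huv : u ≠ v) (huw : u ≠ w) (hvw : v ≠ w) :
    let Rc : ℂ → ℂ → Matrix (n × n) (n × n) ℂ :=
      fun x y => R - (x - y)⁻¹ • (1 : Matrix (n × n) (n × n) ℂ)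
    pos12 (Rc u v) * pos23 (Rc u w) * pos12 (Rc v w)
      = pos23 (Rc v w) * pos12 (Rc u w) * pos23 (Rc u v) := by
  intro Rc
  have ha : pos12 (Rc u v) = pos12 R - (u - v)⁻¹ • 1 := by
    rw [show Rc u v = R - (u-v)⁻¹ • 1 from rfl, pos12_sub', pos12_smul', pos12_one']
  have hc : pos12 (Rc v w) = pos12 R - (v - w)⁻¹ • 1 := by
    rw [show Rc v w = R - (v-w)⁻¹ • 1 from rfl, pos12_sub', pos12_smul', pos12_one']
  have hb : pos23 (Rc u w) = pos23 R - (u - w)⁻¹ • 1 := by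
    rw [show Rc u w = R - (u-w)⁻¹ • 1 from rfl, pos23_sub', pos23_smul', pos23_one']
  have ha' : pos23 (Rc u v) = pos23 R - (u - v)⁻¹ • 1 := by
    rw [show Rc u v = R - (u-v)⁻¹ • 1 from rfl, pos23_sub', pos23_smul', pos23_one']
  have hc' : pos23 (Rc v w) = pos23 R - (v - w)⁻¹ • 1 := by
    rw [show Rc v w = R - (v-w)⁻¹ • 1 from rfl, pos23_sub', pos23_smul', pos23_one']
  have hb' : pos12 (Rc u w) = pos12 R - (u - w)⁻¹ • 1 := by
    rw [show Rc u w = R - (u-w)⁻¹ • 1 from rfl, pos12_sub', pos12_smul', pos12_one']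
  rw [ha, hb, hc, ha', hb', hc']
  have hA : pos12 R * pos12 R = 1 := by rw [← pos12_mul', hinv, pos12_one']
  have hB : pos23 R * pos23 R = 1 := by rw [← pos23_mul', hinv, pos23_one']
  have huv' : u - v ≠ 0 := sub_ne_zero.mpr huv
  have huw' : u - w ≠ 0 := sub_ne_zero.mpr huw
  have hvw' : v - w ≠ 0 := sub_ne_zero.mpr hvw
  have habc : (u - v)⁻¹ * (u - w)⁻¹ + (u - w)⁻¹ * (v - w)⁻¹
      = (u - v)⁻¹ * (v - w)⁻¹ := by
    field_simp
    ring
  exact key_baxter (pos12 R) (pos23 R) _ _ _ hA hB hbraid habc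
end
end

section
/- For any Hecke symmetry R (a braiding with (R−qI)(R+q^{-1}I)=0, q generic) and any nonzero distinct complex numbers u, v, w, the current braiding R(u,v) := R − (q−q^{-1})u/(u−v) · I satisfies the parameter-dependent braid relation R₁₂(u,v) R₂₃(u,w) R₁₂(v,w) = R₂₃(v,w) R₁₂(u,w) R₂₃(u,v). -/
open Matrix Kronecker

noncomputable section

namespace Stmt3Aux

variable {n : Type*} [Fintype n] [DecidableEq n]

lemma pos12_mul (X Y : Matrix (n × n) (n × n) ℂ) :
    pos12 (X * Y) = pos12 X * pos12 Y := by
  simp [pos12, Matrix.reindex_apply, ← Matrix.mul_kronecker_mul,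
    Matrix.submatrix_mul_equiv]

lemma pos12_one : pos12 (1 : Matrix (n × n) (n × n) ℂ) = 1 := by
  simp [pos12, Matrix.one_kronecker_one, Matrix.reindex_apply, Matrix.submatrix_one_equiv]

lemma pos12_smul (c : ℂ) (X : Matrix (n × n) (n × n) ℂ) :
    pos12 (c • X) = c • pos12 X := by
  ext ⟨i1,i2,i3⟩ ⟨j1,j2,j3⟩
  simp [pos12, Matrix.kroneckerMap_apply, mul_assoc]

lemma pos12_sub (X Y : Matrix (n × n) (n × n) ℂ) :
    pos12 (X - Y) = pos12 X - pos12 Y := by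
  ext ⟨i1,i2,i3⟩ ⟨j1,j2,j3⟩
  simp [pos12, Matrix.kroneckerMap_apply, sub_mul]

lemma pos12_add (X Y : Matrix (n × n) (n × n) ℂ) :
    pos12 (X + Y) = pos12 X + pos12 Y := by
  ext ⟨i1,i2,i3⟩ ⟨j1,j2,j3⟩
  simp [pos12, Matrix.kroneckerMap_apply, add_mul]

lemma pos23_mul (X Y : Matrix (n × n) (n × n) ℂ) :
    pos23 (X * Y) = pos23 X * pos23 Y := by
  simp [pos23, ← Matrix.mul_kronecker_mul]

lemma pos23_one : pos23 (1 : Matrix (n × n) (n × n) ℂ) = 1 := by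
  simp [pos23, Matrix.one_kronecker_one]

lemma pos23_smul (c : ℂ) (X : Matrix (n × n) (n × n) ℂ) :
    pos23 (c • X) = c • pos23 X := by
  ext ⟨i1,i2,i3⟩ ⟨j1,j2,j3⟩
  simp [pos23, Matrix.kroneckerMap_apply, mul_assoc, mul_left_comm, mul_comm]

lemma pos23_sub (X Y : Matrix (n × n) (n × n) ℂ) :
    pos23 (X - Y) = pos23 X - pos23 Y := by
  ext ⟨i1,i2,i3⟩ ⟨j1,j2,j3⟩
  simp [pos23, Matrix.kroneckerMap_apply, mul_sub]

lemma pos23_add (X Y : Matrix (n × n) (n × n) ℂ) :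
    pos23 (X + Y) = pos23 X + pos23 Y := by
  ext ⟨i1,i2,i3⟩ ⟨j1,j2,j3⟩
  simp [pos23, Matrix.kroneckerMap_apply, mul_add]

theorem key {M : Type*} [Ring M] [Algebra ℂ M] (A B : M) (a α β γ : ℂ)
    (hbr : A*B*A = B*A*B) (hA : A*A = a•A + 1) (hB : B*B = a•B + 1)
    (hco : β*(α+γ) = α*γ + β*a) :
    (A - α•1)*(B-β•1)*(A-γ•1) = (B-γ•1)*(A-β•1)*(B-α•1) := by
  simp only [sub_mul, mul_sub, smul_mul_assoc, mul_smul_comm, mul_one, one_mul,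
    smul_sub, smul_add, smul_smul]
  rw [hbr, hA, hB]
  match_scalars <;> first
    | ring1
    | linear_combination hco
    | linear_combination -hco
    | linear_combination 2*hco
    | linear_combination -2*hco

end Stmt3Aux

/-- Baxterization of a Hecke symmetry: R(u,v) := R − (q−q⁻¹)u/(u−v)·I
satisfies the parameter-dependent braid relation. -/
theorem stmt3 {n : Type*} [Fintype n] [DecidableEq n]
    (q : ℂ) (hq0 : q ≠ 0) (hq1 : q ≠ 1) (hqm1 : q ≠ -1)
    (hgen : ∀ k : ℕ, k ≠ 0 → q ^ (2 * k) ≠ 1)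
    (R : Matrix (n × n) (n × n) ℂ)
    (hbraid : pos12 R * pos23 R * pos12 R = pos23 R * pos12 R * pos23 R)
    (hHecke : (R - q • (1 : Matrix (n × n) (n × n) ℂ))
        * (R + q⁻¹ • (1 : Matrix (n × n) (n × n) ℂ)) = 0)
    (u v w : ℂ) (hu : u ≠ 0) (hv : v ≠ 0) (hw : w ≠ 0)
    (huv : u ≠ v) (huw : u ≠ w) (hvw : v ≠ w) :
    let Rc : ℂ → ℂ → Matrix (n × n) (n × n) ℂ :=
      fun x y => R - ((q - q⁻¹) * x / (x - y)) • (1 : Matrix (n × n) (n × n) ℂ)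
    pos12 (Rc u v) * pos23 (Rc u w) * pos12 (Rc v w)
      = pos23 (Rc v w) * pos12 (Rc u w) * pos23 (Rc u v) := by
  intro Rc
  have key0 : R * R + q⁻¹ • R - q • R - (q * q⁻¹) • (1 : Matrix (n × n) (n × n) ℂ) = 0 := by
    rw [← hHecke]
    simp only [sub_mul, mul_add, smul_mul_assoc, mul_smul_comm, smul_smul, mul_one, one_mul]
    module
  have hsq : R * R = (q - q⁻¹) • R + 1 := by
    have h1 : (q * q⁻¹ : ℂ) = 1 := mul_inv_cancel₀ hq0
    calc R * R = R * R + q⁻¹ • R - q • R - (q * q⁻¹) • (1 : Matrix (n × n) (n × n) ℂ)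
          + (q • R - q⁻¹ • R + (q * q⁻¹) • 1) := by module
      _ = 0 + (q • R - q⁻¹ • R + (q * q⁻¹) • 1) := by rw [key0]
      _ = (q - q⁻¹) • R + 1 := by rw [h1]; module
  set a : ℂ := q - q⁻¹ with ha
  set α : ℂ := a * u / (u - v) with hα
  set β : ℂ := a * u / (u - w) with hβ
  set γ : ℂ := a * v / (v - w) with hγ
  have huv' : u - v ≠ 0 := sub_ne_zero.mpr huv
  have huw' : u - w ≠ 0 := sub_ne_zero.mpr huw
  have hvw' : v - w ≠ 0 := sub_ne_zero.mpr hvw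
  have hco : β * (α + γ) = α * γ + β * a := by
    rw [hα, hβ, hγ]
    field_simp
    ring
  set A := pos12 R with hA
  set B := pos23 R with hB
  have hA2 : A * A = a • A + 1 := by
    rw [hA, ← Stmt3Aux.pos12_mul, hsq, Stmt3Aux.pos12_add, Stmt3Aux.pos12_smul,
      Stmt3Aux.pos12_one]
  have hB2 : B * B = a • B + 1 := by
    rw [hB, ← Stmt3Aux.pos23_mul, hsq, Stmt3Aux.pos23_add, Stmt3Aux.pos23_smul,
      Stmt3Aux.pos23_one]
  have e12 : ∀ c : ℂ, pos12 (R - c • (1 : Matrix (n × n) (n × n) ℂ)) = A - c • 1 := by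
    intro c
    rw [Stmt3Aux.pos12_sub, Stmt3Aux.pos12_smul, Stmt3Aux.pos12_one, hA]
  have e23 : ∀ c : ℂ, pos23 (R - c • (1 : Matrix (n × n) (n × n) ℂ)) = B - c • 1 := by
    intro c
    rw [Stmt3Aux.pos23_sub, Stmt3Aux.pos23_smul, Stmt3Aux.pos23_one, hB]
  show pos12 (R - ((q - q⁻¹) * u / (u - v)) • 1) * pos23 (R - ((q - q⁻¹) * u / (u - w)) • 1)
      * pos12 (R - ((q - q⁻¹) * v / (v - w)) • 1)
    = pos23 (R - ((q - q⁻¹) * v / (v - w)) • 1) * pos12 (R - ((q - q⁻¹) * u / (u - w)) • 1)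
      * pos23 (R - ((q - q⁻¹) * u / (u - v)) • 1)
  rw [← ha, ← hα, ← hβ, ← hγ, e12 α, e12 γ, e23 β, e23 γ, e23 α, e12 β]
  exact Stmt3Aux.key A B a α β γ hbraid hA2 hB2 hco
end
end

section
/- The reflection equation algebra associated with the involutive symmetry R = [[1,0,0,0],[0,0,q,0],[0,q^{-1},0,0],[0,0,0,1]] is commutative: the defining relations R₁₂L₁R₁₂L₁ = L₁R₁₂L₁R₁₂ for the 2×2 matrix L = [[a,b],[c,d]] imply that all pairs of generators a, b, c, d commute. -/
open Matrix Kronecker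

noncomputable section

/-- the reflection equation algebra of the involutive symmetry is
commutative. -/
theorem stmt10 (q : ℂ) (hq : q ≠ 0)
    (A : Type*) [Ring A] [Algebra ℂ A] (a b c d : A)
    (hRE :
      let RA : Matrix (Fin 2 × Fin 2) (Fin 2 × Fin 2) A :=
        (Rinv q).map (algebraMap ℂ A)
      let L1 : Matrix (Fin 2 × Fin 2) (Fin 2 × Fin 2) A :=
        (!![a, b; c, d] : Matrix (Fin 2) (Fin 2) A) ⊗ₖ (1 : Matrix (Fin 2) (Fin 2) A)
      RA * L1 * RA * L1 = L1 * RA * L1 * RA) :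
    a * b = b * a ∧ a * c = c * a ∧ a * d = d * a
    ∧ b * c = c * b ∧ b * d = d * b ∧ c * d = d * c := by

  have h : ((Rinv q).map (algebraMap ℂ A)) *
      ((!![a, b; c, d] : Matrix (Fin 2) (Fin 2) A) ⊗ₖ (1 : Matrix (Fin 2) (Fin 2) A)) *
      ((Rinv q).map (algebraMap ℂ A)) *
      ((!![a, b; c, d] : Matrix (Fin 2) (Fin 2) A) ⊗ₖ (1 : Matrix (Fin 2) (Fin 2) A)) =
      ((!![a, b; c, d] : Matrix (Fin 2) (Fin 2) A) ⊗ₖ (1 : Matrix (Fin 2) (Fin 2) A)) *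
      ((Rinv q).map (algebraMap ℂ A)) *
      ((!![a, b; c, d] : Matrix (Fin 2) (Fin 2) A) ⊗ₖ (1 : Matrix (Fin 2) (Fin 2) A)) *
      ((Rinv q).map (algebraMap ℂ A)) := hRE
  have key : ∀ (p r : Fin 2 × Fin 2),
      (((Rinv q).map (algebraMap ℂ A)) *
      ((!![a, b; c, d] : Matrix (Fin 2) (Fin 2) A) ⊗ₖ (1 : Matrix (Fin 2) (Fin 2) A)) *
      ((Rinv q).map (algebraMap ℂ A)) *
      ((!![a, b; c, d] : Matrix (Fin 2) (Fin 2) A) ⊗ₖ (1 : Matrix (Fin 2) (Fin 2) A))) p r =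
      (((!![a, b; c, d] : Matrix (Fin 2) (Fin 2) A) ⊗ₖ (1 : Matrix (Fin 2) (Fin 2) A)) *
      ((Rinv q).map (algebraMap ℂ A)) *
      ((!![a, b; c, d] : Matrix (Fin 2) (Fin 2) A) ⊗ₖ (1 : Matrix (Fin 2) (Fin 2) A)) *
      ((Rinv q).map (algebraMap ℂ A))) p r := fun p r => by rw [h]
  have hab := key (0,0) (1,0)
  have hac := key (1,0) (0,0)
  have had := key (0,1) (0,1)
  have hbc := key (0,1) (1,0)
  have hbd := key (0,1) (1,1)
  have hcd := key (1,1) (0,1)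
  simp only [Matrix.mul_apply, Fintype.sum_prod_type, Fin.sum_univ_two, Rinv,
    Matrix.map_apply, Matrix.kroneckerMap_apply, Matrix.of_apply, Matrix.one_apply,
    Prod.mk.injEq, Matrix.cons_val', Matrix.cons_val_zero, Matrix.cons_val_one,
    Matrix.head_cons, Matrix.head_fin_const, Matrix.empty_val',
    Matrix.cons_val_fin_one, if_true, if_false, Fin.zero_eq_one_iff, Fin.one_eq_zero_iff,
    Nat.succ_ne_self, and_true, and_false, true_and, false_and, and_self,
    _root_.map_one, _root_.map_zero, mul_one, mul_zero, one_mul, zero_mul, add_zero,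
    zero_add, if_false_right, if_false_left] at hab hac had hbc hbd hcd
  have hE : ∀ x : A, algebraMap ℂ A q * x = x * algebraMap ℂ A q := fun x => Algebra.commutes q x
  have hF : ∀ x : A, algebraMap ℂ A q⁻¹ * x = x * algebraMap ℂ A q⁻¹ :=
    fun x => Algebra.commutes q⁻¹ x
  have hFE : algebraMap ℂ A q⁻¹ * algebraMap ℂ A q = 1 := by
    rw [← _root_.map_mul, inv_mul_cancel₀ hq, _root_.map_one]
  have hEF : algebraMap ℂ A q * algebraMap ℂ A q⁻¹ = 1 := by
    rw [← _root_.map_mul, mul_inv_cancel₀ hq, _root_.map_one]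
  have hX : algebraMap ℂ A q * d * algebraMap ℂ A q⁻¹ = d := by
    rw [hE d, mul_assoc, hEF, mul_one]
  refine ⟨?_, ?_, ?_, ?_, ?_, ?_⟩
  · rw [hab, mul_assoc b _ a, hF a, ← mul_assoc b a, mul_assoc (b * a), hFE, mul_one]
  · rw [hF a, mul_assoc a, hFE, mul_one] at hac
    exact hac
  · rw [mul_assoc a _ d, mul_assoc a, hX] at had
    exact had.symm
  · rw [hE c, mul_assoc c _ b, hE b, ← mul_assoc c b] at hbc
    have h2 := congrArg (fun x => x * algebraMap ℂ A q⁻¹) hbc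
    simp only [mul_assoc, hEF, mul_one] at h2
    exact h2.symm
  · rw [hX] at hbd
    exact hbd.symm
  · rw [mul_assoc c _ d, mul_assoc c, hX] at hcd
    exact hcd.symm
end
end

section
/- Let A be an associative algebra, Δ: A → A⊗A an algebra homomorphism with Δ(l^i_j) = Σ_k l^i_k ⊗ l^k_j for the entries of an N×N matrix L over A (i.e., Δ(L) = L ⊗̇ L entrywise). If det := ⟨v| L₁L₂⋯L_m |u⟩ = v^{i₁…i_m}(L₁⋯L_m)^{j₁…j_m}_{i₁…i_m} u_{j₁…j_m} where |u⟩⟨v| is an idempotent (A^{(m)} = |u⟩⟨v| with ⟨v,u⟩=1) satisfying A^{(m)} L₁⋯L_m = A^{(m)} L₁⋯L_m A^{(m)}, then det is group-like: Δ(det) = det ⊗ det. -/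
open scoped TensorProduct

noncomputable section

/-- The entrywise product matrix L₁L₂⋯L_m on the m-fold tensor power:
(L₁⋯L_m)_{f g} = L_{f 1, g 1} ⋯ L_{f m, g m} (ordered product). -/
def Lbig {A : Type*} [Ring A] {N m : ℕ} (L : Matrix (Fin N) (Fin N) A) :
    Matrix (Fin m → Fin N) (Fin m → Fin N) A :=
  Matrix.of fun f g => (List.ofFn fun k : Fin m => L (f k) (g k)).prod

/-- The quantum determinant ⟨v| L₁⋯L_m |u⟩. -/
def qdet {A : Type*} [Ring A] [Algebra ℂ A] {N m : ℕ}
    (L : Matrix (Fin N) (Fin N) A)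
    (u v : (Fin m → Fin N) → ℂ) : A :=
  ∑ f : Fin m → Fin N, ∑ g : Fin m → Fin N, (v f * u g) • Lbig L f g

lemma Lbig_succ {A : Type*} [Ring A] {N m : ℕ} (L : Matrix (Fin N) (Fin N) A)
    (f g : Fin (m+1) → Fin N) :
    Lbig L f g = L (f 0) (g 0) * Lbig L (fun i => f i.succ) (fun i => g i.succ) := by
  simp [Lbig, List.ofFn_succ]

lemma delta_Lbig {A : Type*} [Ring A] [Algebra ℂ A] {N : ℕ}
    (Δ : A →ₐ[ℂ] A ⊗[ℂ] A) (L : Matrix (Fin N) (Fin N) A)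
    (hΔ : ∀ i j, Δ (L i j) = ∑ k, L i k ⊗ₜ[ℂ] L k j) :
    ∀ (m : ℕ) (f g : Fin m → Fin N),
      Δ (Lbig L f g) = ∑ h : Fin m → Fin N, Lbig L f h ⊗ₜ[ℂ] Lbig L h g := by
  intro m
  induction m with
  | zero =>
    intro f g
    simp [Lbig, Algebra.TensorProduct.one_def]
  | succ m ih =>
    intro f g
    rw [Lbig_succ, map_mul, hΔ, ih, Finset.sum_mul_sum]
    rw [← Equiv.sum_comp (Fin.consEquiv (fun _ => Fin N))
      (fun h => Lbig L f h ⊗ₜ[ℂ] Lbig L h g), Fintype.sum_prod_type]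
    refine Finset.sum_congr rfl fun k _ => Finset.sum_congr rfl fun h' _ => ?_
    simp [Fin.consEquiv, Lbig_succ, Algebra.TensorProduct.tmul_mul_tmul]

/-- if Δ is an algebra map acting on the matrix L as a matrix
coproduct, A⁽ᵐ⁾ = |u⟩⟨v| with ⟨v,u⟩ = 1, and A⁽ᵐ⁾L₁⋯L_m = A⁽ᵐ⁾L₁⋯L_m A⁽ᵐ⁾,
then the quantum determinant is group-like: Δ(det) = det ⊗ det. -/
theorem stmt16 {N m : ℕ} (A : Type*) [Ring A] [Algebra ℂ A]
    (Δ : A →ₐ[ℂ] A ⊗[ℂ] A)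
    (L : Matrix (Fin N) (Fin N) A)
    (hΔ : ∀ i j, Δ (L i j) = ∑ k, L i k ⊗ₜ[ℂ] L k j)
    (u v : (Fin m → Fin N) → ℂ)
    (hnorm : (∑ f, v f * u f) = 1)
    (hproj : (Matrix.vecMulVec u v).map (algebraMap ℂ A) * Lbig L
        = (Matrix.vecMulVec u v).map (algebraMap ℂ A) * Lbig L
            * (Matrix.vecMulVec u v).map (algebraMap ℂ A)) :
    Δ (qdet L u v) = qdet L u v ⊗ₜ[ℂ] qdet L u v := by
  obtain ⟨f0, hf0⟩ : ∃ f, v f * u f ≠ 0 := by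
    by_contra h
    push_neg at h
    rw [Finset.sum_eq_zero (fun f _ => h f)] at hnorm
    exact zero_ne_one hnorm
  have hu0 : u f0 ≠ 0 := fun h => hf0 (by simp [h])
  have hV : ∀ g, (∑ h, v h • Lbig L h g) = v g • qdet L u v := by
    intro g
    have h1 := congrFun (congrFun hproj f0) g
    simp only [Matrix.mul_apply, Matrix.map_apply, Matrix.vecMulVec_apply,
      ← Algebra.commutes, ← Algebra.smul_def] at h1
    apply smul_right_injective A hu0
    simp only [qdet, Finset.smul_sum, smul_smul] at h1 ⊢
    rw [h1, Finset.sum_comm]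
    refine Finset.sum_congr rfl fun a _ => Finset.sum_congr rfl fun b _ => ?_
    congr 1
    ring
  have key := delta_Lbig Δ L hΔ m
  have expand : ∀ h : Fin m → Fin N,
      (∑ f, v f • Lbig L f h) ⊗ₜ[ℂ] (∑ g, u g • Lbig L h g)
        = ∑ f, ∑ g, (v f * u g) • (Lbig L f h ⊗ₜ[ℂ] Lbig L h g) := by
    intro h
    simp only [TensorProduct.sum_tmul, TensorProduct.tmul_sum, TensorProduct.smul_tmul',
      TensorProduct.tmul_smul, Finset.smul_sum, smul_smul]
    rw [Finset.sum_comm]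
    simp [mul_comm]
  calc Δ (qdet L u v)
      = ∑ f, ∑ g, (v f * u g) • ∑ h, Lbig L f h ⊗ₜ[ℂ] Lbig L h g := by
        simp [qdet, map_sum, key]
    _ = ∑ h : Fin m → Fin N,
          (∑ f, v f • Lbig L f h) ⊗ₜ[ℂ] (∑ g, u g • Lbig L h g) := by
        simp only [expand, Finset.smul_sum]
        have swap : ∀ f : Fin m → Fin N, ∑ g : Fin m → Fin N, ∑ h : Fin m → Fin N,
            (v f * u g) • (Lbig L f h ⊗ₜ[ℂ] Lbig L h g)
            = ∑ h : Fin m → Fin N, ∑ g : Fin m → Fin N,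
            (v f * u g) • (Lbig L f h ⊗ₜ[ℂ] Lbig L h g) := fun _ => Finset.sum_comm
        simp only [swap]
        rw [Finset.sum_comm]
    _ = ∑ h : Fin m → Fin N,
          (v h • qdet L u v) ⊗ₜ[ℂ] (∑ g, u g • Lbig L h g) := by
        simp only [hV]
    _ = qdet L u v ⊗ₜ[ℂ] ∑ h, ∑ g, (v h * u g) • Lbig L h g := by
        simp [TensorProduct.smul_tmul, TensorProduct.tmul_sum, Finset.smul_sum, smul_smul,
          mul_comm]
    _ = qdet L u v ⊗ₜ[ℂ] qdet L u v := rfl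
end
end
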